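/- Let λ, δ, ρ be proper m-marked cycle shapes (m₁ = 0) and n ≥ max(m, |λ|, |δ|, |ρ|). Then the structure coefficient of Z_{n,m} satisfies c_{λ̲ₙ δ̲ₙ}^{ρ̲ₙ}(n) = Σ_{k=0}^{n−|ρ|} k_{λδ}^{ρ^k} · C(n − |ρ|, k), where the k_{λδ}^{ρ^k} are nonnegative integers independent of n. In particular, c_{λ̲ₙ δ̲ₙ}^{ρ̲ₙ}(n) is a polynomial in n. -/

import Mathlib

/-- An `m`-partial permutation (of ℕ): a finite domain `d` containing `[m] = {0,…,m-1}`
together with a permutation of `d`, encoded by its extension `σ` to `ℕ` which is the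
identity outside `d`. -/
structure MPP (m : ℕ) where
  d : Finset ℕ
  σ : Equiv.Perm ℕ
  range_sub : Finset.range m ⊆ d
  fix : ∀ x ∉ d, σ x = x

namespace MPP

variable {m : ℕ}

@[ext] theorem ext {p q : MPP m} (hd : p.d = q.d) (hσ : p.σ = q.σ) : p = q := by
  cases p; cases q; simp only [mk.injEq]; exact ⟨hd, hσ⟩

/-- The product of `m`-partial permutations: union of the domains, composition of the
extended permutations (restricted to the union). -/
instance : Monoid (MPP m) where
  mul p q := ⟨p.d ∪ q.d, p.σ * q.σ, p.range_sub.trans Finset.subset_union_left,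
    fun x hx => by
      have hq : x ∉ q.d := fun h => hx (Finset.mem_union_right _ h)
      have hp : x ∉ p.d := fun h => hx (Finset.mem_union_left _ h)
      simp [Equiv.Perm.mul_apply, q.fix x hq, p.fix x hp]⟩
  one := ⟨Finset.range m, 1, le_refl _, fun _ _ => rfl⟩
  mul_assoc p q r := ext (Finset.union_assoc _ _ _) (mul_assoc _ _ _)
  one_mul p := ext (Finset.union_eq_right.mpr p.range_sub) (one_mul _)
  mul_one p := ext (Finset.union_eq_left.mpr p.range_sub) (mul_one _)

@[simp] theorem mul_d (p q : MPP m) : (p * q).d = p.d ∪ q.d := rfl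
@[simp] theorem mul_σ (p q : MPP m) : (p * q).σ = p.σ * q.σ := rfl
@[simp] theorem one_d : (1 : MPP m).d = Finset.range m := rfl
@[simp] theorem one_σ : (1 : MPP m).σ = 1 := rfl

/-- Two `m`-partial permutations have the same `m`-marked cycle type iff there is a
relabelling of ℕ fixing `[m]` pointwise carrying one to the other. -/
def sameType (p q : MPP m) : Prop :=
  ∃ σ : Equiv.Perm ℕ, (∀ x < m, σ x = x) ∧ p.d.image σ = q.d ∧ σ * p.σ * σ⁻¹ = q.σ

/-- `m₁`: the number of trivial cycles `(∗)`, i.e. fixed points of the permutation lying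
in the domain but outside `[m]`. -/
def m1 (p : MPP m) : ℕ := ((p.d \ Finset.range m).filter (fun x => p.σ x = x)).card

/-- `p` padded with fixed points so that its domain becomes `[n]` (when `p.d ⊆ [n]`);
this realizes the shape `ρ̲ₙ`. -/
def padTo (n : ℕ) (p : MPP m) : MPP m :=
  ⟨p.d ∪ Finset.range n, p.σ, p.range_sub.trans Finset.subset_union_left,
   fun x hx => p.fix x fun h => hx (Finset.mem_union_left _ h)⟩

/-- `p` with `k` fresh fixed points adjoined to its domain; this realizes the shape `ρᵏ`. -/
def addFix (p : MPP m) (k : ℕ) : MPP m :=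
  ⟨p.d ∪ (Finset.range (p.d.sup id + 1 + k) \ Finset.range (p.d.sup id + 1)), p.σ,
   p.range_sub.trans Finset.subset_union_left,
   fun x hx => p.fix x fun h => hx (Finset.mem_union_left _ h)⟩

/-- A shape is proper when it has no cycle `(∗)`, i.e. no fixed point outside `[m]`. -/
def isProper (p : MPP m) : Prop := ∀ x ∈ p.d, m ≤ x → p.σ x ≠ x

/-- The subgroup `Stab_n(m)` of permutations of ℕ fixing `[m]` pointwise and fixing
everything outside `[n]` (i.e. `Stab_n(m) ≤ S_n`). -/
def StabN (m n : ℕ) : Subgroup (Equiv.Perm ℕ) where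
  carrier := {σ | (∀ x < m, σ x = x) ∧ (∀ x, n ≤ x → σ x = x)}
  one_mem' := ⟨fun _ _ => rfl, fun _ _ => rfl⟩
  mul_mem' := by
    rintro σ τ ⟨h1, h2⟩ ⟨h3, h4⟩
    exact ⟨fun x hx => by simp [Equiv.Perm.mul_apply, h3 x hx, h1 x hx],
           fun x hx => by simp [Equiv.Perm.mul_apply, h4 x hx, h2 x hx]⟩
  inv_mem' := by
    rintro σ ⟨h1, h2⟩
    refine ⟨fun x hx => ?_, fun x hx => ?_⟩
    · conv_lhs => rw [← h1 x hx]
      exact σ.symm_apply_apply x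
    · conv_lhs => rw [← h2 x hx]
      exact σ.symm_apply_apply x

/-- The conjugation action of `Stab_n(m)` on `m`-partial permutations:
`σ·(d,ω) = (σ(d), σ∘ω∘σ⁻¹)`. -/
def conjAct {n : ℕ} (σ : StabN m n) (p : MPP m) : MPP m :=
  ⟨p.d.image (σ : Equiv.Perm ℕ), (σ : Equiv.Perm ℕ) * p.σ * (σ : Equiv.Perm ℕ)⁻¹,
   fun x hx => Finset.mem_image.mpr
     ⟨x, p.range_sub hx, σ.2.1 x (Finset.mem_range.mp hx)⟩,
   fun x hx => by
     have h1 : (σ : Equiv.Perm ℕ)⁻¹ x ∉ p.d := fun h =>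
       hx (Finset.mem_image.mpr ⟨_, h, Equiv.apply_symm_apply (σ : Equiv.Perm ℕ) x⟩)
     show (σ : Equiv.Perm ℕ) (p.σ ((σ : Equiv.Perm ℕ)⁻¹ x)) = x
     rw [p.fix _ h1]
     exact Equiv.apply_symm_apply (σ : Equiv.Perm ℕ) x⟩

end MPP

/-- The class sum K_{ρ̲ₙ} in ℤ[S_n] ⊆ ℤ[Perm ℕ], where ρ is represented by `r`
(with `r.d ⊆ [n]`): the sum of all permutations of [n] of m-marked cycle type ρ̲ₙ. -/
noncomputable def Kn (m n : ℕ) (r : MPP m) : MonoidAlgebra ℤ (Equiv.Perm ℕ) :=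
  ∑ᶠ p ∈ {p : MPP m | p.d ⊆ Finset.range n ∧ MPP.sameType (r.padTo n) p},
    MonoidAlgebra.single p.σ (1 : ℤ)

/-- The structure coefficient k_{λδ}^{ρᵏ} of the universal algebra: the number of pairs
of m-partial permutations of types λ, δ whose product is the fixed m-partial
permutation `r.addFix k` of type ρᵏ. -/
noncomputable def kcoef (m : ℕ) (rl rd r : MPP m) (k : ℕ) : ℕ :=
  Nat.card {pq : MPP m × MPP m //
    MPP.sameType rl pq.1 ∧ MPP.sameType rd pq.2 ∧ pq.1 * pq.2 = r.addFix k}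

namespace MPPAux
open MPP Finset Equiv
open scoped Classical

variable {m : ℕ}

/-- A permutation fixing the complement of `s` maps `s` into itself. -/
lemma perm_mem {σ : Equiv.Perm ℕ} {s : Finset ℕ} (hfix : ∀ x ∉ s, σ x = x)
    {x : ℕ} (hx : x ∈ s) : σ x ∈ s := by
  by_contra h
  have h1 : σ (σ x) = σ x := hfix _ h
  have h2 : σ x = x := σ.injective h1
  exact h (by rw [h2]; exact hx)

lemma perm_image_eq {σ : Equiv.Perm ℕ} {s : Finset ℕ} (hfix : ∀ x ∉ s, σ x = x) :
    s.image σ = s := by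
  apply Finset.eq_of_subset_of_card_le
  · intro y hy
    rcases Finset.mem_image.mp hy with ⟨x, hx, rfl⟩
    exact perm_mem hfix hx
  · rw [Finset.card_image_of_injective _ σ.injective]

lemma conj_eq_conj {σ0 : Equiv.Perm ℕ} {s : Finset ℕ} (hfix : ∀ x ∉ s, σ0 x = x)
    {τ π : Equiv.Perm ℕ} (hagree : ∀ x ∈ s, π x = τ x) :
    π * σ0 * π⁻¹ = τ * σ0 * τ⁻¹ := by
  ext y
  simp only [Equiv.Perm.mul_apply]
  by_cases h : π⁻¹ y ∈ s
  · set x := π⁻¹ y with hx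
    have hyx : y = π x := (Equiv.apply_symm_apply π y).symm
    have hyt : y = τ x := by rw [hyx, hagree x h]
    have hty : τ⁻¹ y = x := by rw [hyt, Equiv.Perm.coe_inv, Equiv.symm_apply_apply]
    have hσx : σ0 x ∈ s := perm_mem hfix h
    rw [hty, hagree _ hσx]
  · have h2 : τ⁻¹ y ∉ s := by
      intro hmem
      have h3 : y = π (τ⁻¹ y) := by rw [hagree _ hmem, Equiv.Perm.coe_inv, Equiv.apply_symm_apply]
      exact h (by rw [h3, Equiv.Perm.coe_inv, Equiv.symm_apply_apply]; exact hmem)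
    rw [hfix _ h, hfix _ h2, Equiv.Perm.coe_inv, Equiv.apply_symm_apply, Equiv.Perm.coe_inv, Equiv.apply_symm_apply]

/-- Extend a bijection between finsets to a permutation of ℕ. -/
lemma exists_perm_extend (A B : Finset ℕ) (f : ℕ → ℕ)
    (hinj : Set.InjOn f A) (himg : A.image f = B) :
    ∃ π : Equiv.Perm ℕ, (∀ x ∈ A, π x = f x) ∧ ∀ x ∉ A ∪ B, π x = x := by
  classical
  have hg : (B \ A).card = (A \ B).card := by
    have hcard : A.card = B.card := by rw [← himg, Finset.card_image_of_injOn hinj]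
    have h1 := Finset.card_sdiff_add_card_inter B A
    have h2 := Finset.card_sdiff_add_card_inter A B
    rw [Finset.inter_comm] at h1
    omega
  set g := Finset.equivOfCardEq hg with hgdef
  have hfB : ∀ x ∈ A, f x ∈ B := fun x hx => himg ▸ Finset.mem_image_of_mem f hx
  set C := A ∪ B with hC
  have hmem1 : ∀ x : ℕ, x ∈ A → f x ∈ C := fun x hx =>
    Finset.mem_union_right _ (hfB x hx)
  have hBA : ∀ x : {x // x ∈ C}, x.1 ∉ A → x.1 ∈ B \ A := fun x hx =>
    Finset.mem_sdiff.mpr ⟨(Finset.mem_union.mp x.2).resolve_left hx, hx⟩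
  have hmem2 : ∀ (x : ℕ) (hx : x ∈ B \ A), (g ⟨x, hx⟩ : ℕ) ∈ C := fun x hx =>
    Finset.mem_union_left _ (Finset.mem_sdiff.mp (g ⟨x, hx⟩).2).1
  set F : {x // x ∈ C} → {x // x ∈ C} := fun x =>
    if hx : x.1 ∈ A then ⟨f x.1, hmem1 x.1 hx⟩
    else ⟨(g ⟨x.1, hBA x hx⟩ : ℕ), hmem2 _ _⟩ with hF
  have hFA : ∀ (x : {x // x ∈ C}) (hx : x.1 ∈ A), (F x).1 = f x.1 := by
    intro x hx; simp only [hF, dif_pos hx]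
  have hFnA : ∀ (x : {x // x ∈ C}) (hx : x.1 ∉ A), (F x).1 = (g ⟨x.1, hBA x hx⟩ : ℕ) := by
    intro x hx; simp only [hF, dif_neg hx]
  have hFinj : Function.Injective F := by
    intro x y hxy
    by_cases hx : x.1 ∈ A <;> by_cases hy : y.1 ∈ A
    · have : f x.1 = f y.1 := by rw [← hFA x hx, ← hFA y hy, hxy]
      exact Subtype.ext (hinj hx hy this)
    · exfalso
      have h1 : (F x).1 ∈ B := by rw [hFA x hx]; exact hfB x.1 hx
      have h2 : (F y).1 ∈ A \ B := by
        rw [hFnA y hy]; exact (g ⟨y.1, hBA y hy⟩).2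
      rw [hxy] at h1
      exact (Finset.mem_sdiff.mp h2).2 h1
    · exfalso
      have h1 : (F y).1 ∈ B := hFA y hy ▸ hfB y.1 hy
      have h2 : (F x).1 ∈ A \ B := by
        rw [hFnA x hx]; exact (g ⟨x.1, hBA x hx⟩).2
      rw [hxy] at h2
      exact (Finset.mem_sdiff.mp h2).2 h1
    · have : (g ⟨x.1, hBA x hx⟩ : ℕ) = (g ⟨y.1, hBA y hy⟩ : ℕ) := by
        rw [← hFnA x hx, ← hFnA y hy, hxy]
      have h2 := g.injective (Subtype.ext this)
      have h3 : x.1 = y.1 := Subtype.mk_eq_mk.mp h2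
      exact Subtype.ext h3
  have hFbij : Function.Bijective F := Finite.injective_iff_bijective.mp hFinj
  set π0 : Equiv.Perm {x // x ∈ C} := Equiv.ofBijective F hFbij with hπ0
  set π : Equiv.Perm ℕ := π0.extendDomain (Equiv.refl {x // x ∈ C}) with hπ
  refine ⟨π, ?_, ?_⟩
  · intro x hx
    have hxC : x ∈ C := Finset.mem_union_left _ hx
    have h1 := Equiv.Perm.extendDomain_apply_subtype π0 (Equiv.refl {x // x ∈ C}) hxC
    rw [hπ, h1]
    simp only [Equiv.refl_symm, Equiv.refl_apply]
    rw [show π0 ⟨x, hxC⟩ = F ⟨x, hxC⟩ from rfl]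
    exact hFA ⟨x, hxC⟩ hx
  · intro x hx
    exact Equiv.Perm.extendDomain_apply_not_subtype π0 (Equiv.refl {x // x ∈ C}) hx

lemma mem_d_apply (p : MPP m) {x : ℕ} (hx : x ∈ p.d) : p.σ x ∈ p.d :=
  perm_mem p.fix hx

lemma mem_d_of_ne {p : MPP m} {x : ℕ} (h : p.σ x ≠ x) : x ∈ p.d := by
  by_contra hx; exact h (p.fix x hx)

/-- The essential domain of a partial permutation. -/
def core (p : MPP m) : Finset ℕ :=
  Finset.range m ∪ p.d.filter (fun x => p.σ x ≠ x)

lemma core_subset (p : MPP m) : core p ⊆ p.d :=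
  Finset.union_subset p.range_sub (Finset.filter_subset _ _)

lemma core_eq_of_proper {p : MPP m} (h : p.isProper) : core p = p.d := by
  apply Finset.Subset.antisymm (core_subset p)
  intro x hx
  rcases lt_or_ge x m with hm | hm
  · exact Finset.mem_union_left _ (Finset.mem_range.mpr hm)
  · exact Finset.mem_union_right _ (Finset.mem_filter.mpr ⟨hx, h x hx hm⟩)

/-- Trim a partial permutation to its essential domain. -/
def trim (p : MPP m) : MPP m :=
  ⟨core p, p.σ, Finset.subset_union_left, fun x hx => by
    by_contra h
    exact hx (Finset.mem_union_right _ (Finset.mem_filter.mpr ⟨mem_d_of_ne h, h⟩))⟩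

@[simp] lemma trim_σ (p : MPP m) : (trim p).σ = p.σ := rfl
@[simp] lemma trim_d (p : MPP m) : (trim p).d = core p := rfl

lemma trim_eq_of_proper {p : MPP m} (h : p.isProper) : trim p = p :=
  MPP.ext (core_eq_of_proper h) rfl

@[simp] lemma padTo_σ (p : MPP m) (n : ℕ) : (p.padTo n).σ = p.σ := rfl
@[simp] lemma padTo_d (p : MPP m) (n : ℕ) : (p.padTo n).d = p.d ∪ Finset.range n := rfl

lemma padTo_d_eq {p : MPP m} {n : ℕ} (h : p.d ⊆ Finset.range n) :
    (p.padTo n).d = Finset.range n := Finset.union_eq_right.mpr h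

lemma trim_padTo (p : MPP m) (n : ℕ) : trim (p.padTo n) = trim p := by
  refine MPP.ext ?_ rfl
  show core (p.padTo n) = core p
  unfold core
  congr 1
  ext x
  rw [Finset.mem_filter, Finset.mem_filter]
  simp only [Finset.mem_filter, padTo_d, padTo_σ, Finset.mem_union]
  constructor
  · rintro ⟨hx | hx, hne⟩
    · exact ⟨hx, hne⟩
    · exact ⟨mem_d_of_ne hne, hne⟩
  · rintro ⟨hx, hne⟩
    exact ⟨Or.inl hx, hne⟩

lemma sameType_refl (p : MPP m) : MPP.sameType p p :=
  ⟨1, fun _ _ => rfl, by simp, by simp⟩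

lemma sameType_symm {p q : MPP m} (h : MPP.sameType p q) : MPP.sameType q p := by
  obtain ⟨σ, h1, h2, h3⟩ := h
  refine ⟨σ⁻¹, fun x hx => ?_, ?_, ?_⟩
  · conv_lhs => rw [← h1 x hx]
    exact σ.symm_apply_apply x
  · rw [← h2, Finset.image_image]
    have : (⇑σ⁻¹ ∘ ⇑σ) = id := by
      funext y; simp
    rw [this, Finset.image_id]
  · rw [← h3]; group

lemma sameType_trans {p q s : MPP m} (h : MPP.sameType p q) (h' : MPP.sameType q s) :
    MPP.sameType p s := by
  obtain ⟨σ, h1, h2, h3⟩ := h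
  obtain ⟨τ, h4, h5, h6⟩ := h'
  refine ⟨τ * σ, fun x hx => ?_, ?_, ?_⟩
  · simp [Equiv.Perm.mul_apply, h1 x hx, h4 x hx]
  · rw [← h5, ← h2, Finset.image_image]; rfl
  · rw [← h6, ← h3]; group

lemma isProper_of_sameType {p q : MPP m} (hp : p.isProper) (h : MPP.sameType p q) :
    q.isProper := by
  obtain ⟨σ, h1, h2, h3⟩ := h
  intro y hy hm hfix
  rw [← h2] at hy
  rcases Finset.mem_image.mp hy with ⟨x, hx, rfl⟩
  rw [← h3] at hfix
  simp only [Equiv.Perm.mul_apply, Equiv.Perm.coe_inv, Equiv.symm_apply_apply] at hfix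
  have hxfix : p.σ x = x := σ.injective hfix
  rcases lt_or_ge x m with hxm | hxm
  · rw [h1 x hxm] at hm; omega
  · exact hp x hx hxm hxfix

lemma sameType_trim {p q : MPP m} (h : MPP.sameType p q) :
    MPP.sameType (trim p) (trim q) := by
  obtain ⟨σ, h1, h2, h3⟩ := h
  refine ⟨σ, h1, ?_, h3⟩
  show (core p).image σ = core q
  unfold core
  rw [Finset.image_union]
  congr 1
  · apply Finset.eq_of_subset_of_card_le
    · intro y hy
      rcases Finset.mem_image.mp hy with ⟨x, hx, rfl⟩
      rw [h1 x (Finset.mem_range.mp hx)]; exact hx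
    · rw [Finset.card_image_of_injective _ σ.injective]
  · ext y
    simp only [Finset.mem_image, Finset.mem_filter]
    constructor
    · rintro ⟨x, ⟨hx, hne⟩, rfl⟩
      refine ⟨h2 ▸ Finset.mem_image_of_mem _ hx, ?_⟩
      rw [← h3]
      simp only [Equiv.Perm.mul_apply, Equiv.Perm.coe_inv, Equiv.symm_apply_apply]
      exact fun hc => hne (σ.injective hc)
    · rintro ⟨hy, hne⟩
      rw [← h2] at hy
      rcases Finset.mem_image.mp hy with ⟨x, hx, rfl⟩
      refine ⟨x, ⟨hx, fun hc => ?_⟩, rfl⟩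
      rw [← h3] at hne
      simp only [Equiv.Perm.mul_apply, Equiv.Perm.coe_inv, Equiv.symm_apply_apply] at hne
      exact hne (by rw [hc])

lemma sameType_padTo {t p : MPP m} (h : MPP.sameType t p) (n : ℕ)
    (ht : t.d ⊆ Finset.range n) (hp : p.d ⊆ Finset.range n) :
    MPP.sameType (t.padTo n) (p.padTo n) := by
  obtain ⟨τ, h1, h2, h3⟩ := h
  obtain ⟨π, hπ1, hπ2⟩ := exists_perm_extend t.d p.d τ (Set.injOn_of_injective τ.injective) h2
  refine ⟨π, fun x hx => ?_, ?_, ?_⟩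
  · rw [hπ1 x (t.range_sub (Finset.mem_range.mpr hx))]
    exact h1 x hx
  · rw [padTo_d_eq ht, padTo_d_eq hp]
    apply perm_image_eq
    intro x hx
    apply hπ2
    intro hc
    rcases Finset.mem_union.mp hc with h' | h'
    · exact hx (ht h')
    · exact hx (hp h')
  · show π * t.σ * π⁻¹ = p.σ
    rw [conj_eq_conj t.fix hπ1, h3]
/-- Conjugation of a partial permutation by a permutation fixing `[m]` pointwise. -/
def cnj (γ : Equiv.Perm ℕ) (hγ : ∀ x < m, γ x = x) (p : MPP m) : MPP m :=
  ⟨p.d.image γ, γ * p.σ * γ⁻¹,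
   fun x hx => Finset.mem_image.mpr
     ⟨x, p.range_sub hx, hγ x (Finset.mem_range.mp hx)⟩,
   fun x hx => by
     have h1 : γ⁻¹ x ∉ p.d := fun h =>
       hx (Finset.mem_image.mpr ⟨_, h, Equiv.apply_symm_apply _ x⟩)
     simp [Equiv.Perm.mul_apply, p.fix _ (show γ.symm x ∉ p.d from h1)]⟩

@[simp] lemma cnj_d (γ : Equiv.Perm ℕ) (hγ : ∀ x < m, γ x = x) (p : MPP m) :
    (cnj γ hγ p).d = p.d.image γ := rfl
@[simp] lemma cnj_σ (γ : Equiv.Perm ℕ) (hγ : ∀ x < m, γ x = x) (p : MPP m) :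
    (cnj γ hγ p).σ = γ * p.σ * γ⁻¹ := rfl

lemma inv_fix {γ : Equiv.Perm ℕ} (hγ : ∀ x < m, γ x = x) : ∀ x < m, γ⁻¹ x = x := by
  intro x hx
  conv_lhs => rw [← hγ x hx]
  exact γ.symm_apply_apply x

lemma cnj_mul (γ : Equiv.Perm ℕ) (hγ : ∀ x < m, γ x = x) (p q : MPP m) :
    cnj γ hγ (p * q) = cnj γ hγ p * cnj γ hγ q := by
  refine MPP.ext ?_ ?_
  · show (p.d ∪ q.d).image γ = p.d.image γ ∪ q.d.image γ
    exact Finset.image_union _ _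
  · show γ * (p.σ * q.σ) * γ⁻¹ = (γ * p.σ * γ⁻¹) * (γ * q.σ * γ⁻¹)
    group

lemma cnj_cnj_inv (γ : Equiv.Perm ℕ) (hγ : ∀ x < m, γ x = x) (p : MPP m) :
    cnj γ⁻¹ (inv_fix hγ) (cnj γ hγ p) = p := by
  refine MPP.ext ?_ ?_
  · show (p.d.image ⇑γ).image ⇑γ⁻¹ = p.d
    rw [Finset.image_image]
    have : (⇑γ⁻¹ ∘ ⇑γ) = id := by funext y; simp
    rw [this, Finset.image_id]
  · show γ⁻¹ * (γ * p.σ * γ⁻¹) * γ⁻¹⁻¹ = p.σ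
    group

lemma cnj_inv_cnj (γ : Equiv.Perm ℕ) (hγ : ∀ x < m, γ x = x) (p : MPP m) :
    cnj γ hγ (cnj γ⁻¹ (inv_fix hγ) p) = p := by
  refine MPP.ext ?_ ?_
  · show (p.d.image ⇑γ⁻¹).image ⇑γ = p.d
    rw [Finset.image_image]
    have : (⇑γ ∘ ⇑γ⁻¹) = id := by funext y; simp
    rw [this, Finset.image_id]
  · show γ * (γ⁻¹ * p.σ * γ⁻¹⁻¹) * γ⁻¹ = p.σ
    group

lemma cnj_sameType (γ : Equiv.Perm ℕ) (hγ : ∀ x < m, γ x = x) {t p : MPP m}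
    (h : MPP.sameType t p) : MPP.sameType t (cnj γ hγ p) := by
  obtain ⟨τ, h1, h2, h3⟩ := h
  refine ⟨γ * τ, fun x hx => ?_, ?_, ?_⟩
  · simp [Equiv.Perm.mul_apply, h1 x hx, hγ x hx]
  · show t.d.image (γ * τ) = p.d.image γ
    rw [← h2, Finset.image_image]; rfl
  · show (γ * τ) * t.σ * (γ * τ)⁻¹ = γ * p.σ * γ⁻¹
    rw [← h3]; group
lemma sigma_lt {p : MPP m} {n : ℕ} (hpn : p.d ⊆ Finset.range n) {i : ℕ} (hi : i < n) :
    p.σ i < n := by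
  by_cases h : i ∈ p.d
  · exact Finset.mem_range.mp (hpn (mem_d_apply p h))
  · rw [p.fix i h]; exact hi

lemma classSet_finite (t : MPP m) (n : ℕ) :
    {p : MPP m | p.d ⊆ Finset.range n ∧ MPP.sameType (t.padTo n) p}.Finite := by
  classical
  set S := {p : MPP m | p.d ⊆ Finset.range n ∧ MPP.sameType (t.padTo n) p} with hS
  have : Finite ↥S := by
    let j : ↥S → {A // A ∈ (Finset.range n).powerset} × (Fin n → Fin n) := fun p =>
      (⟨p.1.d, Finset.mem_powerset.mpr p.2.1⟩,
       fun i => ⟨p.1.σ i, sigma_lt p.2.1 i.2⟩)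
    have hj : Function.Injective j := by
      intro p q hpq
      have hd : p.1.d = q.1.d := congrArg Subtype.val (congrArg Prod.fst hpq)
      have hσfun := congrArg Prod.snd hpq
      have hσ : p.1.σ = q.1.σ := by
        apply Equiv.ext
        intro x
        by_cases hx : x < n
        · have := congrFun hσfun ⟨x, hx⟩
          exact congrArg Fin.val this
        · have hx1 : x ∉ p.1.d := fun h => hx (Finset.mem_range.mp (p.2.1 h))
          have hx2 : x ∉ q.1.d := fun h => hx (Finset.mem_range.mp (q.2.1 h))
          rw [p.1.fix x hx1, q.1.fix x hx2]
      exact Subtype.ext (MPP.ext hd hσ)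
    exact Finite.of_injective j hj
  exact Set.toFinite S

lemma mem_class_d_eq {t p : MPP m} {n : ℕ} (htn : t.d ⊆ Finset.range n)
    (hp : p.d ⊆ Finset.range n) (h : MPP.sameType (t.padTo n) p) :
    p.d = Finset.range n := by
  obtain ⟨σ, h1, h2, h3⟩ := h
  rw [padTo_d_eq htn] at h2
  apply Finset.eq_of_subset_of_card_le hp
  rw [← h2, Finset.card_image_of_injective _ σ.injective]

lemma sameType_trim_of_mem_class {t p : MPP m} {n : ℕ} (ht : t.isProper)
    (h : MPP.sameType (t.padTo n) p) : MPP.sameType t (trim p) := by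
  have h1 := sameType_trim h
  rwa [trim_padTo, trim_eq_of_proper ht] at h1

lemma exists_gamma (r : MPP m) (E : Finset ℕ) (hE : ∀ x ∈ E, x ∉ r.d) :
    ∃ (γ : Equiv.Perm ℕ) (hγ : ∀ x < m, γ x = x),
      (cnj γ hγ (r.addFix E.card)).d = r.d ∪ E ∧
      (cnj γ hγ (r.addFix E.card)).σ = r.σ := by
  classical
  set s := r.d.sup id with hs
  set k := E.card with hk
  set fresh : Finset ℕ := Finset.range (s + 1 + k) \ Finset.range (s + 1) with hfresh
  have hfreshcard : fresh.card = k := by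
    rw [hfresh, Finset.card_sdiff_of_subset (Finset.range_subset_range.mpr (by omega)),
        Finset.card_range, Finset.card_range]
    omega
  have hfresh_rd : ∀ x ∈ fresh, x ∉ r.d := by
    intro x hx hxd
    have h1 : x ≤ s := Finset.le_sup (f := id) hxd
    have h2 : ¬ x < s + 1 := fun h => (Finset.mem_sdiff.mp hx).2 (Finset.mem_range.mpr h)
    omega
  have hce : fresh.card = E.card := by rw [hfreshcard]
  set e := Finset.equivOfCardEq hce with he
  set f : ℕ → ℕ := fun x => if hx : x ∈ fresh then (e ⟨x, hx⟩ : ℕ) else x with hf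
  have hfid : ∀ x ∈ r.d, f x = x := by
    intro x hx
    rw [hf]
    simp only
    rw [dif_neg (fun hc => hfresh_rd x hc hx)]
  have hfE : ∀ (x : ℕ) (hx : x ∈ fresh), f x = (e ⟨x, hx⟩ : ℕ) := by
    intro x hx; rw [hf]; simp only [dif_pos hx]
  have hA : (r.addFix k).d = r.d ∪ fresh := rfl
  have himg : ((r.addFix k).d).image f = r.d ∪ E := by
    rw [hA, Finset.image_union]
    congr 1
    · apply Finset.eq_of_subset_of_card_le
      · intro y hy
        rcases Finset.mem_image.mp hy with ⟨x, hx, rfl⟩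
        rw [hfid x hx]; exact hx
      · apply le_of_eq
        apply (Finset.card_image_of_injOn ?_).symm
        intro a ha b hb hab
        rwa [hfid a ha, hfid b hb] at hab
    · ext y
      simp only [Finset.mem_image]
      constructor
      · rintro ⟨x, hx, rfl⟩
        rw [hfE x hx]
        exact (e ⟨x, hx⟩).2
      · intro hy
        refine ⟨(e.symm ⟨y, hy⟩ : ℕ), (e.symm ⟨y, hy⟩).2, ?_⟩
        rw [hfE _ (e.symm ⟨y, hy⟩).2]
        simp
  have hinj : Set.InjOn f ((r.addFix k).d : Set ℕ) := by
    intro a ha b hb hab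
    rw [hA] at ha hb
    simp only [Finset.coe_union, Set.mem_union, Finset.mem_coe] at ha hb
    by_cases hfa : a ∈ fresh <;> by_cases hfb : b ∈ fresh
    · rw [hfE a hfa, hfE b hfb] at hab
      have := e.injective (Subtype.ext hab)
      exact Subtype.mk_eq_mk.mp this
    · exfalso
      have hbd : b ∈ r.d := hb.resolve_right hfb
      rw [hfE a hfa, hfid b hbd] at hab
      exact hE b (hab ▸ (e ⟨a, hfa⟩).2) hbd
    · exfalso
      have had : a ∈ r.d := ha.resolve_right hfa
      rw [hfid a had, hfE b hfb] at hab
      exact hE a (hab ▸ (e ⟨b, hfb⟩).2) had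
    · have had : a ∈ r.d := ha.resolve_right hfa
      have hbd : b ∈ r.d := hb.resolve_right hfb
      rwa [hfid a had, hfid b hbd] at hab
  obtain ⟨γ, hγ1, hγ2⟩ := exists_perm_extend (r.addFix k).d (r.d ∪ E) f hinj himg
  have hγrd : ∀ x ∈ r.d, γ x = x := by
    intro x hx
    rw [hγ1 x (hA ▸ Finset.mem_union_left _ hx), hfid x hx]
  have hγm : ∀ x < m, γ x = x := fun x hx =>
    hγrd x (r.range_sub (Finset.mem_range.mpr hx))
  refine ⟨γ, hγm, ?_, ?_⟩
  · show ((r.addFix k).d).image γ = r.d ∪ E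
    rw [← himg]
    apply Finset.image_congr
    intro x hx
    exact hγ1 x hx
  · show γ * (r.addFix k).σ * γ⁻¹ = r.σ
    have hfix : ∀ x ∉ r.d, (r.addFix k).σ x = x := fun x hx => r.fix x hx
    have h1 : γ * (r.addFix k).σ * γ⁻¹ = 1 * (r.addFix k).σ * 1⁻¹ :=
      conj_eq_conj hfix (fun x hx => by rw [hγrd x hx]; rfl)
    rw [h1]
    simp only [inv_one, mul_one, one_mul]
    rfl
/-- The partial permutation with domain `r.d ∪ E` and permutation `r.σ`. -/
def mkD (r : MPP m) (E : Finset ℕ) (hE : ∀ x ∈ E, x ∉ r.d) : MPP m :=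
  ⟨r.d ∪ E, r.σ, r.range_sub.trans Finset.subset_union_left,
   fun x hx => r.fix x fun h => hx (Finset.mem_union_left _ h)⟩

@[simp] lemma mkD_d (r : MPP m) (E : Finset ℕ) (hE : ∀ x ∈ E, x ∉ r.d) :
    (mkD r E hE).d = r.d ∪ E := rfl
@[simp] lemma mkD_σ (r : MPP m) (E : Finset ℕ) (hE : ∀ x ∈ E, x ∉ r.d) :
    (mkD r E hE).σ = r.σ := rfl

lemma card_M_eq_kcoef (rl rd r : MPP m) (E : Finset ℕ) (hE : ∀ x ∈ E, x ∉ r.d) :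
    Nat.card {ab : MPP m × MPP m // MPP.sameType rl ab.1 ∧ MPP.sameType rd ab.2 ∧
        ab.1 * ab.2 = mkD r E hE} = kcoef m rl rd r E.card := by
  obtain ⟨γ, hγ, hd, hσ⟩ := exists_gamma r E hE
  have hPD : cnj γ hγ (r.addFix E.card) = mkD r E hE := MPP.ext hd hσ
  rw [kcoef]
  apply Nat.card_congr
  refine ⟨fun x => ⟨(cnj γ⁻¹ (inv_fix hγ) x.1.1, cnj γ⁻¹ (inv_fix hγ) x.1.2), ?_, ?_, ?_⟩,
          fun x => ⟨(cnj γ hγ x.1.1, cnj γ hγ x.1.2), ?_, ?_, ?_⟩, ?_, ?_⟩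
  · exact cnj_sameType γ⁻¹ (inv_fix hγ) x.2.1
  · exact cnj_sameType γ⁻¹ (inv_fix hγ) x.2.2.1
  · show cnj γ⁻¹ (inv_fix hγ) x.1.1 * cnj γ⁻¹ (inv_fix hγ) x.1.2 = r.addFix E.card
    rw [← cnj_mul, x.2.2.2, ← hPD, cnj_cnj_inv]
  · exact cnj_sameType γ hγ x.2.1
  · exact cnj_sameType γ hγ x.2.2.1
  · show cnj γ hγ x.1.1 * cnj γ hγ x.1.2 = mkD r E hE
    rw [← cnj_mul, x.2.2.2, hPD]
  · intro x
    apply Subtype.ext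
    apply Prod.ext
    · exact cnj_inv_cnj γ hγ x.1.1
    · exact cnj_inv_cnj γ hγ x.1.2
  · intro x
    apply Subtype.ext
    apply Prod.ext
    · exact cnj_cnj_inv γ hγ x.1.1
    · exact cnj_cnj_inv γ hγ x.1.2
lemma fiber_card_eq (rl rd r : MPP m) (hl : rl.isProper) (hd : rd.isProper)
    (hr : r.isProper) (n : ℕ) (hln : rl.d ⊆ Finset.range n)
    (hdn : rd.d ⊆ Finset.range n) (hrn : r.d ⊆ Finset.range n)
    (E : Finset ℕ) (hEsub : E ⊆ Finset.range n \ r.d) :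
    (((classSet_finite rl n).toFinset ×ˢ (classSet_finite rd n).toFinset).filter
      (fun ab : MPP m × MPP m => ab.1.σ * ab.2.σ = r.σ ∧
        ((trim ab.1).d ∪ (trim ab.2).d) \ r.d = E)).card
      = kcoef m rl rd r E.card := by
  classical
  have hE : ∀ x ∈ E, x ∉ r.d := fun x hx => (Finset.mem_sdiff.mp (hEsub hx)).2
  have hEn : E ⊆ Finset.range n := fun x hx => (Finset.mem_sdiff.mp (hEsub hx)).1
  rw [← card_M_eq_kcoef rl rd r E hE, ← Nat.card_eq_finsetCard]
  apply Nat.card_congr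
  have hmem :
      ∀ x ∈ ((classSet_finite rl n).toFinset ×ˢ (classSet_finite rd n).toFinset).filter
        (fun ab : MPP m × MPP m => ab.1.σ * ab.2.σ = r.σ ∧
          ((trim ab.1).d ∪ (trim ab.2).d) \ r.d = E),
      (x.1.d ⊆ Finset.range n ∧ MPP.sameType (rl.padTo n) x.1) ∧
      (x.2.d ⊆ Finset.range n ∧ MPP.sameType (rd.padTo n) x.2) ∧
      x.1.σ * x.2.σ = r.σ ∧ ((trim x.1).d ∪ (trim x.2).d) \ r.d = E := by
    intro x hx
    have h1 := Finset.mem_filter.mp hx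
    have h2 := Finset.mem_product.mp h1.1
    exact ⟨(Set.Finite.mem_toFinset (classSet_finite rl n)).mp h2.1,
           (Set.Finite.mem_toFinset (classSet_finite rd n)).mp h2.2,
           h1.2.1, h1.2.2⟩
  refine ⟨fun x => ⟨(trim x.1.1, trim x.1.2), ?_, ?_, ?_⟩,
          fun y => ⟨(y.1.1.padTo n, y.1.2.padTo n), ?_⟩, ?_, ?_⟩
  · exact sameType_trim_of_mem_class hl ((hmem x.1 x.2).1.2)
  · exact sameType_trim_of_mem_class hd ((hmem x.1 x.2).2.1.2)
  · -- trim a * trim b = mkD r E hE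
    obtain ⟨⟨hs1, ht1⟩, ⟨hs2, ht2⟩, hσ, hφ⟩ := hmem x.1 x.2
    have hrsub : r.d ⊆ (trim x.1.1).d ∪ (trim x.1.2).d := by
      intro z hz
      rcases lt_or_ge z m with hzm | hzm
      · exact Finset.mem_union_left _
          (Finset.mem_union_left _ (Finset.mem_range.mpr hzm))
      · have hne : r.σ z ≠ z := hr z hz hzm
        have hne2 : x.1.1.σ (x.1.2.σ z) ≠ z := by
          intro hc; exact hne (by rw [← hσ]; exact hc)
        by_cases hb : x.1.2.σ z = z
        · apply Finset.mem_union_left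
          apply Finset.mem_union_right
          refine Finset.mem_filter.mpr ⟨mem_d_of_ne ?_, ?_⟩ <;>
            · intro hc; rw [hb] at hne2; exact hne2 hc
        · exact Finset.mem_union_right _ (Finset.mem_union_right _
            (Finset.mem_filter.mpr ⟨mem_d_of_ne hb, hb⟩))
    refine MPP.ext ?_ hσ
    show (trim x.1.1).d ∪ (trim x.1.2).d = r.d ∪ E
    conv_rhs => rw [← hφ, Finset.union_sdiff_of_subset hrsub]
  · -- membership of the padded pair
    obtain ⟨hp, hq, hprod⟩ := y.2
    have hdu : y.1.1.d ∪ y.1.2.d = r.d ∪ E := congrArg MPP.d hprod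
    have hpd : y.1.1.d ⊆ Finset.range n := by
      intro z hz
      have : z ∈ r.d ∪ E := by rw [← hdu]; exact Finset.mem_union_left _ hz
      rcases Finset.mem_union.mp this with h | h
      · exact hrn h
      · exact hEn h
    have hqd : y.1.2.d ⊆ Finset.range n := by
      intro z hz
      have : z ∈ r.d ∪ E := by rw [← hdu]; exact Finset.mem_union_right _ hz
      rcases Finset.mem_union.mp this with h | h
      · exact hrn h
      · exact hEn h
    have hp' : y.1.1.isProper := isProper_of_sameType hl hp
    have hq' : y.1.2.isProper := isProper_of_sameType hd hq
    refine Finset.mem_filter.mpr ⟨Finset.mem_product.mpr ⟨?_, ?_⟩, ?_, ?_⟩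
    · refine (Set.Finite.mem_toFinset (classSet_finite rl n)).mpr ⟨?_, sameType_padTo hp n hln hpd⟩
      rw [padTo_d_eq hpd]
    · refine (Set.Finite.mem_toFinset (classSet_finite rd n)).mpr ⟨?_, sameType_padTo hq n hdn hqd⟩
      rw [padTo_d_eq hqd]
    · show y.1.1.σ * y.1.2.σ = r.σ
      have := congrArg MPP.σ hprod
      exact this
    · show ((trim (y.1.1.padTo n)).d ∪ (trim (y.1.2.padTo n)).d) \ r.d = E
      rw [trim_padTo, trim_padTo, trim_eq_of_proper hp', trim_eq_of_proper hq', hdu]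
      exact Finset.union_sdiff_cancel_left (Finset.disjoint_left.mpr fun a ha hb => hE a hb ha)
  · intro x
    apply Subtype.ext
    obtain ⟨⟨hs1, ht1⟩, ⟨hs2, ht2⟩, hσ, hφ⟩ := hmem x.1 x.2
    have hda : x.1.1.d = Finset.range n := mem_class_d_eq hln hs1 ht1
    have hdb : x.1.2.d = Finset.range n := mem_class_d_eq hdn hs2 ht2
    apply Prod.ext
    · refine MPP.ext ?_ rfl
      show (trim x.1.1).d ∪ Finset.range n = x.1.1.d
      rw [hda]
      exact Finset.union_eq_right.mpr ((core_subset x.1.1).trans (by rw [hda]))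
    · refine MPP.ext ?_ rfl
      show (trim x.1.2).d ∪ Finset.range n = x.1.2.d
      rw [hdb]
      exact Finset.union_eq_right.mpr ((core_subset x.1.2).trans (by rw [hdb]))
  · intro y
    apply Subtype.ext
    obtain ⟨hp, hq, hprod⟩ := y.2
    have hp' : y.1.1.isProper := isProper_of_sameType hl hp
    have hq' : y.1.2.isProper := isProper_of_sameType hd hq
    apply Prod.ext
    · show trim (y.1.1.padTo n) = y.1.1
      rw [trim_padTo, trim_eq_of_proper hp']
    · show trim (y.1.2.padTo n) = y.1.2
      rw [trim_padTo, trim_eq_of_proper hq']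
end MPPAux

/-- for proper shapes λ, δ, ρ and n ≥ max(m,|λ|,|δ|,|ρ|),
c_{λ̲ₙδ̲ₙ}^{ρ̲ₙ}(n) = ∑_{k=0}^{n−|ρ|} k_{λδ}^{ρᵏ}·C(n−|ρ|, k), the k's being
nonnegative integers independent of n. The structure coefficient c is read off as the
coefficient of K_{λ̲ₙ}K_{δ̲ₙ} at the permutation r.σ (of type ρ̲ₙ). -/
theorem structure_coeff_polynomiality (m : ℕ) (rl rd r : MPP m)
    (hl : rl.isProper) (hd : rd.isProper) (hr : r.isProper)
    (n : ℕ) (hmn : m ≤ n) (hln : rl.d ⊆ Finset.range n)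
    (hdn : rd.d ⊆ Finset.range n) (hrn : r.d ⊆ Finset.range n) :
    (Kn m n rl * Kn m n rd).coeff r.σ =
      ∑ k ∈ Finset.range (n - r.d.card + 1),
        (kcoef m rl rd r k : ℤ) * (n - r.d.card).choose k := by
  classical
  have hSl := MPPAux.classSet_finite rl n
  have hSd := MPPAux.classSet_finite rd n
  have hKl : Kn m n rl = ∑ p ∈ hSl.toFinset, MonoidAlgebra.single p.σ (1:ℤ) := by
    exact finsum_mem_eq_finite_toFinset_sum _ hSl
  have hKd : Kn m n rd = ∑ p ∈ hSd.toFinset, MonoidAlgebra.single p.σ (1:ℤ) := by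
    exact finsum_mem_eq_finite_toFinset_sum _ hSd
  have hlhs : (Kn m n rl * Kn m n rd).coeff r.σ =
      (((hSl.toFinset ×ˢ hSd.toFinset).filter
        (fun ab : MPP m × MPP m => ab.1.σ * ab.2.σ = r.σ)).card : ℤ) := by
    rw [hKl, hKd, Finset.sum_mul_sum]
    simp only [MonoidAlgebra.single_mul_single, one_mul]
    rw [← Finset.sum_product']
    rw [MonoidAlgebra.coeff_sum, Finsupp.finset_sum_apply]
    simp only [MonoidAlgebra.single_apply]
    rw [Finset.sum_boole]
  rw [hlhs]
  have hcount : ((hSl.toFinset ×ˢ hSd.toFinset).filter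
        (fun ab : MPP m × MPP m => ab.1.σ * ab.2.σ = r.σ)).card
      = ∑ k ∈ Finset.range (n - r.d.card + 1),
          kcoef m rl rd r k * (n - r.d.card).choose k := by
    have hmap : ∀ ab ∈ (hSl.toFinset ×ˢ hSd.toFinset).filter
        (fun ab : MPP m × MPP m => ab.1.σ * ab.2.σ = r.σ),
        ((MPPAux.trim ab.1).d ∪ (MPPAux.trim ab.2).d) \ r.d
          ∈ (Finset.range n \ r.d).powerset := by
      intro ab hab
      have h1 := Finset.mem_filter.mp hab
      have h2 := Finset.mem_product.mp h1.1
      have ha := (Set.Finite.mem_toFinset hSl).mp h2.1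
      have hb := (Set.Finite.mem_toFinset hSd).mp h2.2
      apply Finset.mem_powerset.mpr
      intro z hz
      have h3 := Finset.mem_sdiff.mp hz
      refine Finset.mem_sdiff.mpr ⟨?_, h3.2⟩
      rcases Finset.mem_union.mp h3.1 with h | h
      · exact ha.1 (MPPAux.core_subset ab.1 h)
      · exact hb.1 (MPPAux.core_subset ab.2 h)
    rw [Finset.card_eq_sum_card_fiberwise hmap]
    have hfib : ∀ E ∈ (Finset.range n \ r.d).powerset,
        (((hSl.toFinset ×ˢ hSd.toFinset).filter
          (fun ab : MPP m × MPP m => ab.1.σ * ab.2.σ = r.σ)).filter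
          (fun ab => ((MPPAux.trim ab.1).d ∪ (MPPAux.trim ab.2).d) \ r.d = E)).card
        = kcoef m rl rd r E.card := by
      intro E hE
      rw [Finset.filter_filter]
      exact MPPAux.fiber_card_eq rl rd r hl hd hr n hln hdn hrn E
        (Finset.mem_powerset.mp hE)
    rw [Finset.sum_congr rfl hfib, Finset.sum_powerset]
    have hcard : (Finset.range n \ r.d).card = n - r.d.card := by
      rw [Finset.card_sdiff_of_subset hrn, Finset.card_range]
    refine Finset.sum_congr (by rw [hcard]) ?_
    intro j hj
    rw [Finset.sum_powersetCard j (Finset.range n \ r.d) (kcoef m rl rd r),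
        hcard, smul_eq_mul, mul_comm]
  rw [hcount]
  push_cast
  rfl
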